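/- arXiv:1202.5587 — 2 statements merged into one kernel-verified Lean document; each statement's English description precedes it below -/
import Mathlib

section
/- Let p ≥ 2 be an integer and c > 0, and let (ā_n)_{n ≥ 1} be defined recursively by ā_n = c Σ_{k=0}^{p} C(p,k) Σ_{n_1 + … + n_k = n−1, n_i ≥ 1} ā_{n_1} ⋯ ā_{n_k}. Then the power series w(z) = Σ_{n=1}^∞ ā_n z^n converges (absolutely) for all real z with |z| ≤ (p−1)^{p−1}/(c·p^p); in particular its radius of convergence is at least (p−1)^{p−1}/(c·p^p) > 0. -/
/-! With `b n = ā n r^n` for the critical radius `r`, the recursion becomes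
`b (n+1) = c r Σ_k C(p,k) Σ_{compositions of n} b_{n_1} ⋯ b_{n_k}`, and the compositions of
all `m ≤ N` into `k` positive parts inject into `{1,…,N}^k`. Hence the partial sums satisfy
`S_{N+1} ≤ c r (1 + S_N)^p`, and `B = 1/(p-1)` is a fixed point of `x ↦ c r (1 + x)^p`
exactly at `r = (p-1)^(p-1)/(c p^p)`, so every partial sum stays below `B`. -/

open Finset

section Compositions

variable {R : Type*} [CommSemiring R]

def compositionSum (a : ℕ → R) (k m : ℕ) : R :=
  ∑ t ∈ (Nat.antidiagonalTuple k m).filter (fun t => ∀ i, 1 ≤ t i), ∏ i, a (t i)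

theorem Finset.Nat.le_of_mem_antidiagonalTuple {k m : ℕ} {t : Fin k → ℕ}
    (ht : t ∈ Nat.antidiagonalTuple k m) (i : Fin k) : t i ≤ m :=
  Nat.mem_antidiagonalTuple.1 ht ▸ single_le_sum (fun _ _ => Nat.zero_le _) (mem_univ i)

theorem compositionSum_mul_pow (a : ℕ → R) (r : R) (k m : ℕ) :
    compositionSum (fun n => a n * r ^ n) k m = r ^ m * compositionSum a k m := by
  rw [compositionSum, compositionSum, mul_sum]
  refine sum_congr rfl fun t ht => ?_
  rw [prod_mul_distrib, prod_pow_eq_pow_sum, Nat.mem_antidiagonalTuple.1 (mem_filter.1 ht).1,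
    mul_comm]

variable [PartialOrder R] [IsOrderedRing R] {a : ℕ → R}

theorem compositionSum_nonneg {k m : ℕ} (ha : ∀ n, 1 ≤ n → n ≤ m → 0 ≤ a n) :
    0 ≤ compositionSum a k m :=
  sum_nonneg fun _ ht => prod_nonneg fun i _ =>
    ha _ ((mem_filter.1 ht).2 i) (Nat.le_of_mem_antidiagonalTuple (mem_filter.1 ht).1 i)

theorem sum_range_compositionSum_le (ha : ∀ n, 0 ≤ a (n + 1)) (k N : ℕ) :
    ∑ m ∈ range (N + 1), compositionSum a k m ≤ (∑ n ∈ range N, a (n + 1)) ^ k := by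
  set comp := fun m => (Nat.antidiagonalTuple k m).filter (fun t => ∀ i, 1 ≤ t i)
  have hdisj : (range (N + 1) : Set ℕ).PairwiseDisjoint comp := fun m _ m' _ hmm' =>
    disjoint_filter_filter <| disjoint_left.2 fun _ h h' =>
      hmm' ((Nat.mem_antidiagonalTuple.1 h).symm.trans (Nat.mem_antidiagonalTuple.1 h'))
  have hsub : (range (N + 1)).biUnion comp ⊆ Fintype.piFinset fun _ => Icc 1 N := by
    intro t ht
    obtain ⟨m, hm, ht⟩ := mem_biUnion.1 ht
    exact Fintype.mem_piFinset.2 fun i => mem_Icc.2 ⟨(mem_filter.1 ht).2 i,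
      (Nat.le_of_mem_antidiagonalTuple (mem_filter.1 ht).1 i).trans
        (Nat.lt_succ_iff.1 (mem_range.1 hm))⟩
  calc ∑ m ∈ range (N + 1), compositionSum a k m
      = ∑ t ∈ (range (N + 1)).biUnion comp, ∏ i, a (t i) := (sum_biUnion hdisj).symm
    _ ≤ ∑ t ∈ Fintype.piFinset fun _ => Icc 1 N, ∏ i, a (t i) := by
      refine sum_le_sum_of_subset_of_nonneg hsub fun t ht _ => prod_nonneg fun i _ => ?_
      obtain ⟨n, hn⟩ := Nat.exists_eq_add_of_le' (mem_Icc.1 (Fintype.mem_piFinset.1 ht i)).1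
      exact hn ▸ ha n
    _ = (∑ n ∈ range N, a (n + 1)) ^ k := by
      rw [← prod_univ_sum, prod_const, card_univ, Fintype.card_fin, range_eq_Ico,
        sum_Ico_add' a 0 N 1, zero_add, Ico_add_one_right_eq_Icc]

variable {K : ℕ} {w : ℕ → R}

theorem nonneg_of_eq_sum_compositionSum (hw : ∀ k, 0 ≤ w k)
    (ha : ∀ n, a (n + 1) = ∑ k ∈ range K, w k * compositionSum a k n) (n : ℕ) :
    0 ≤ a (n + 1) := by
  induction n using Nat.strong_induction_on with
  | _ n ih =>
    rw [ha]
    refine sum_nonneg fun k _ => mul_nonneg (hw k) (compositionSum_nonneg fun j hj hjn => ?_)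
    obtain ⟨i, rfl⟩ := Nat.exists_eq_add_of_le' hj
    exact ih i (by omega)

theorem sum_range_le_of_eq_sum_compositionSum (hw : ∀ k, 0 ≤ w k)
    (ha : ∀ n, a (n + 1) = ∑ k ∈ range K, w k * compositionSum a k n) {B : R} (hB : 0 ≤ B)
    (hwB : ∑ k ∈ range K, w k * B ^ k ≤ B) (N : ℕ) :
    ∑ n ∈ range N, a (n + 1) ≤ B := by
  induction N with
  | zero => simpa using hB
  | succ N ih =>
    have hnonneg := nonneg_of_eq_sum_compositionSum hw ha
    calc ∑ n ∈ range (N + 1), a (n + 1)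
        = ∑ k ∈ range K, w k * ∑ m ∈ range (N + 1), compositionSum a k m := by
          simp_rw [ha, mul_sum]
          exact sum_comm
      _ ≤ ∑ k ∈ range K, w k * (∑ n ∈ range N, a (n + 1)) ^ k := by
          gcongr with k
          · exact hw k
          · exact sum_range_compositionSum_le hnonneg k N
      _ ≤ ∑ k ∈ range K, w k * B ^ k := by
          gcongr with k
          · exact hw k
          · exact sum_nonneg fun n _ => hnonneg n
      _ ≤ B := hwB

end Compositions

theorem summable_of_eq_sum_compositionSum {K : ℕ} {w a : ℕ → ℝ} (hw : ∀ k, 0 ≤ w k)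
    (ha : ∀ n, a (n + 1) = ∑ k ∈ range K, w k * compositionSum a k n) {B : ℝ} (hB : 0 ≤ B)
    (hwB : ∑ k ∈ range K, w k * B ^ k ≤ B) :
    Summable fun n => a (n + 1) :=
  summable_of_sum_range_le (nonneg_of_eq_sum_compositionSum hw ha)
    (sum_range_le_of_eq_sum_compositionSum hw ha hB hwB)

theorem sum_range_mul_choose_mul_pow {p : ℕ} (C x : ℝ) :
    ∑ k ∈ range (p + 1), C * p.choose k * x ^ k = C * (1 + x) ^ p := by
  rw [add_comm 1 x, add_pow, mul_sum]
  exact sum_congr rfl fun k _ => by ring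

theorem critical_radius_fixed_point {p : ℕ} (hp : 2 ≤ p) {c : ℝ} (hc : c ≠ 0) :
    c * (((p : ℝ) - 1) ^ (p - 1) / (c * (p : ℝ) ^ p)) * (1 + 1 / ((p : ℝ) - 1)) ^ p =
      1 / ((p : ℝ) - 1) := by
  have hp1 : (p : ℝ) - 1 ≠ 0 := sub_ne_zero.2 (by exact_mod_cast (by omega : p ≠ 1))
  have hpow : ((p : ℝ) - 1) ^ p = ((p : ℝ) - 1) ^ (p - 1) * ((p : ℝ) - 1) := by
    rw [← pow_succ, Nat.sub_add_cancel (by omega)]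
  rw [one_add_div hp1, sub_add_cancel, div_pow, hpow]
  field_simp

/-- the power series `w(z) = Σ_{n≥1} ā_n z^n` built from the recursively defined
sequence `(ā_n)` converges absolutely for all real `z` with `|z| ≤ (p−1)^{p−1}/(c·p^p)`; in
particular its radius of convergence is at least `(p−1)^{p−1}/(c·p^p) > 0`. -/
theorem abar_series_converges (p : ℕ) (hp : 2 ≤ p) (c : ℝ) (hc : 0 < c)
    (abar : ℕ → ℝ)
    (hrec : ∀ n : ℕ, 1 ≤ n →
      abar n = c * ∑ k ∈ Finset.range (p + 1), (p.choose k : ℝ) *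
        ∑ t ∈ (Finset.Nat.antidiagonalTuple k (n - 1)).filter (fun t => ∀ i, 1 ≤ t i),
          ∏ i, abar (t i)) :
    0 < ((p : ℝ) - 1) ^ (p - 1) / (c * (p : ℝ) ^ p) ∧
    ∀ z : ℝ, |z| ≤ ((p : ℝ) - 1) ^ (p - 1) / (c * (p : ℝ) ^ p) →
      Summable (fun n : ℕ => |abar (n + 1) * z ^ (n + 1)|) := by
  have hp1 : (0 : ℝ) < p - 1 := sub_pos.2 (by exact_mod_cast hp)
  set r := ((p : ℝ) - 1) ^ (p - 1) / (c * (p : ℝ) ^ p)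
  have hr : 0 < r := by positivity
  refine ⟨hr, fun z hz => ?_⟩
  have ha : ∀ n, abar (n + 1) =
      ∑ k ∈ range (p + 1), c * p.choose k * compositionSum abar k n := fun n => by
    rw [hrec (n + 1) n.succ_pos, add_tsub_cancel_right, mul_sum]
    simp_rw [mul_assoc, compositionSum]
  have hb : ∀ n, abar (n + 1) * r ^ (n + 1) = ∑ k ∈ range (p + 1),
      c * r * p.choose k * compositionSum (fun n => abar n * r ^ n) k n := fun n => by
    rw [ha, sum_mul]
    refine sum_congr rfl fun k _ => ?_
    rw [compositionSum_mul_pow, pow_succ]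
    ring
  have hsum := summable_of_eq_sum_compositionSum (w := fun k => c * r * p.choose k)
    (a := fun n => abar n * r ^ n) (fun k => by positivity) hb (B := 1 / ((p : ℝ) - 1))
    (by positivity)
    (by rw [sum_range_mul_choose_mul_pow, critical_radius_fixed_point hp hc.ne'])
  refine hsum.of_nonneg_of_le (fun n => abs_nonneg _) fun n => ?_
  have hn := nonneg_of_eq_sum_compositionSum (w := fun k => c * p.choose k)
    (fun k => by positivity) ha n
  rw [abs_mul, abs_pow, abs_of_nonneg hn]
  gcongr
end

section
/- Let H_1,…,H_k be finite simple graphs, where H_i has m_i vertices (2 ≤ m_i ≤ m) and p_i edges (1 ≤ p_i ≤ p) with p ≥ 2, and let β_1,…,β_k ∈ ℝ. Fix M > 1 and suppose m(m−1) Σ_{i=1}^k |β_i| ≤ (log M)(p−1)^p / (2(Mp)^p(1 + (p−1) log M)). For each n, set K(X) = n² Σ_{i=1}^k β_i d(H_i,X) for X ⊆ E_n and W_n = 2^{−C(n,2)} Σ_{σ : E_n → {0,1}} exp(Σ_{X ⊆ E_n} K(X) σ_X). Then for every n, |log W_n| ≤ C(n,2) · log M; in particular, any limit point of the sequence (1/C(n,2))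 log W_n is bounded in absolute value by log M. -/
open Finset

attribute [local instance] Classical.propDecidable

/-- `E_n`: the set of vertex pairs (2-element subsets) of `V_n = Fin n`, modeled as
non-diagonal elements of `Sym2 (Fin n)`. -/
abbrev VertexPair (n : ℕ) := {e : Sym2 (Fin n) // ¬ e.IsDiag}

/-- Exact homomorphism density `d(H,X) = |ehom(H,X)| / n^{m'}`. -/
noncomputable def exactDensity {m' n : ℕ} (H : SimpleGraph (Fin m')) (X : Finset (VertexPair n)) :
    ℝ :=
  (Nat.card {f : Fin m' → Fin n //
      (∀ u v, H.Adj u v → f u ≠ f v) ∧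
      Sym2.map f '' H.edgeSet = Subtype.val '' (X : Set (VertexPair n))} : ℝ) / (n : ℝ) ^ m'

/-- The interaction `K(X) = n² Σ_{i=1}^k β_i d(H_i,X)` for `X ⊆ E_n`. -/
noncomputable def interactionK {k : ℕ} (mi : Fin k → ℕ) (H : ∀ i, SimpleGraph (Fin (mi i)))
    (β : Fin k → ℝ) (n : ℕ) (X : Finset (VertexPair n)) : ℝ :=
  (n : ℝ) ^ 2 * ∑ i, β i * exactDensity (H i) X

/-- The normalized lattice gas partition function
`W_n = 2^{−C(n,2)} Σ_{σ : E_n → {0,1}} exp(Σ_{X ⊆ E_n} K(X) σ_X)`. -/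
noncomputable def latticeW {k : ℕ} (mi : Fin k → ℕ) (H : ∀ i, SimpleGraph (Fin (mi i)))
    (β : Fin k → ℝ) (n : ℕ) : ℝ :=
  ((2 : ℝ) ^ n.choose 2)⁻¹ *
    ∑ σ : VertexPair n → Bool,
      Real.exp (∑ X : Finset (VertexPair n),
        interactionK mi H β n X * ∏ e ∈ X, (if σ e then (1 : ℝ) else 0))

/-!
A map `f : V(H) → V_n` is an exact homomorphism onto at most one `X`, and for an edge `uv` of `H`
only maps with `f u ≠ f v` qualify; since a fraction `1/n` of all maps has `f u = f v`, the
densities `d(H, X)` sum to at most `1 - 1/n`. So every energy `Σ_X K(X) σ_X` is at most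
`n (n - 1) Σ |β_i| = 2 C(n,2) Σ |β_i|` in absolute value, and so is `log W_n`, the logarithm of an
average of exponentials of energies. The small-parameter condition with `m (m - 1) ≥ 2` gives
`2 Σ |β_i| ≤ log M`.
-/

lemma card_pow_le_mul_card_filter_apply_eq {α β : Type*} [Fintype α] [DecidableEq α] [Fintype β]
    [DecidableEq β] {u v : α} (huv : u ≠ v) :
    Fintype.card β ^ Fintype.card α ≤ Fintype.card β * #{f : α → β | f u = f v} := by
  let collapse : (α → β) → β × {f : α → β // f u = f v} := fun f =>
    (f v, ⟨Function.update f v (f u), by simp [huv]⟩)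
  have hinj : collapse.Injective := by
    intro f g hfg
    simp only [collapse, Prod.mk.injEq, Subtype.mk.injEq] at hfg
    funext w
    by_cases hw : w = v
    · exact hw ▸ hfg.1
    · simpa [hw] using congrFun hfg.2 w
  simpa [Fintype.card_subtype] using Fintype.card_le_of_injective collapse hinj

/-- `ehom(H, X)` as a finset of maps `Fin m' → Fin n`. -/
noncomputable def exactHoms {m' n : ℕ} (H : SimpleGraph (Fin m')) (X : Finset (VertexPair n)) :
    Finset (Fin m' → Fin n) :=
  {f | (∀ u v, H.Adj u v → f u ≠ f v) ∧
    Sym2.map f '' H.edgeSet = Subtype.val '' (X : Set (VertexPair n))}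

section ExactHoms

variable {m' n : ℕ} (H : SimpleGraph (Fin m'))

lemma exactDensity_nonneg (X : Finset (VertexPair n)) : 0 ≤ exactDensity H X := by
  unfold exactDensity
  positivity

lemma exactDensity_eq_card_exactHoms_div (X : Finset (VertexPair n)) :
    exactDensity H X = #(exactHoms H X) / (n : ℝ) ^ m' := by
  rw [exactDensity, exactHoms, Nat.card_eq_fintype_card, Fintype.card_subtype]

lemma pairwiseDisjoint_exactHoms :
    (Set.univ : Set (Finset (VertexPair n))).PairwiseDisjoint (exactHoms H) := by
  intro X _ Y _ hXY
  refine Finset.disjoint_left.mpr fun f hfX hfY => hXY ?_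
  simp only [exactHoms, Finset.mem_filter, Finset.mem_univ, true_and] at hfX hfY
  exact Finset.coe_injective <|
    (Set.image_injective.mpr Subtype.val_injective) (hfX.2.symm.trans hfY.2)

lemma sum_card_exactHoms_le {u v : Fin m'} (huv : H.Adj u v) :
    ∑ X : Finset (VertexPair n), #(exactHoms H X) ≤ #{f : Fin m' → Fin n | f u ≠ f v} := by
  rw [← Finset.card_biUnion fun X _ Y _ => pairwiseDisjoint_exactHoms H trivial trivial]
  refine Finset.card_le_card fun f hf => ?_
  obtain ⟨X, -, hfX⟩ := Finset.mem_biUnion.mp hf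
  simp only [exactHoms, Finset.mem_filter, Finset.mem_univ, true_and] at hfX ⊢
  exact hfX.1 u v huv

lemma sq_mul_sum_exactDensity_le {u v : Fin m'} (huv : H.Adj u v) :
    (n : ℝ) ^ 2 * ∑ X : Finset (VertexPair n), exactDensity H X ≤ n * (n - 1) := by
  rcases Nat.eq_zero_or_pos n with rfl | hn
  · simp
  have hcollapse : (n : ℝ) ^ m' ≤ n * #{f : Fin m' → Fin n | f u = f v} := by
    exact_mod_cast (by simpa using card_pow_le_mul_card_filter_apply_eq (β := Fin n) huv.ne)
  have hsplit : (#{f : Fin m' → Fin n | f u ≠ f v} : ℝ) + #{f : Fin m' → Fin n | f u = f v}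
      = (n : ℝ) ^ m' := by
    have := Finset.card_filter_add_card_filter_not (s := Finset.univ)
      (fun f : Fin m' → Fin n => f u = f v)
    rw [add_comm]
    exact_mod_cast (by simpa using this)
  have hsum : (∑ X : Finset (VertexPair n), (#(exactHoms H X) : ℝ))
      ≤ #{f : Fin m' → Fin n | f u ≠ f v} := by
    exact_mod_cast sum_card_exactHoms_le H huv
  simp_rw [exactDensity_eq_card_exactHoms_div, ← Finset.sum_div]
  rw [mul_div_assoc', div_le_iff₀ (by positivity)]
  have hn' : (0 : ℝ) < n := by exact_mod_cast hn
  nlinarith [mul_le_mul_of_nonneg_left hsum (sq_nonneg (n : ℝ))]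

end ExactHoms

lemma abs_sum_interactionK_mul_le {k : ℕ} {mi : Fin k → ℕ} {H : ∀ i, SimpleGraph (Fin (mi i))}
    (hH : ∀ i, H i ≠ ⊥) (β : Fin k → ℝ) (n : ℕ) {w : Finset (VertexPair n) → ℝ}
    (hw : ∀ X, |w X| ≤ 1) :
    |∑ X, interactionK mi H β n X * w X| ≤ n * (n - 1) * ∑ i, |β i| := by
  have hK : ∀ X,
      |interactionK mi H β n X| ≤ ∑ i, |β i| * ((n : ℝ) ^ 2 * exactDensity (H i) X) := by
    intro X
    have hd : ∀ i, |β i * exactDensity (H i) X| = |β i| * exactDensity (H i) X := fun i => by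
      rw [abs_mul, abs_of_nonneg (exactDensity_nonneg _ _)]
    rw [interactionK, abs_mul, abs_of_nonneg (sq_nonneg _)]
    calc (n : ℝ) ^ 2 * |∑ i, β i * exactDensity (H i) X|
        ≤ (n : ℝ) ^ 2 * ∑ i, |β i| * exactDensity (H i) X := by
          rw [← Finset.sum_congr rfl fun i _ => hd i]
          gcongr
          exact Finset.abs_sum_le_sum_abs _ _
      _ = _ := by rw [Finset.mul_sum]; ring_nf
  calc |∑ X, interactionK mi H β n X * w X|
      ≤ ∑ X, |interactionK mi H β n X| := by
        refine (Finset.abs_sum_le_sum_abs _ _).trans (Finset.sum_le_sum fun X _ => ?_)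
        rw [abs_mul]
        exact mul_le_of_le_one_right (abs_nonneg _) (hw X)
    _ ≤ ∑ i, |β i| * ((n : ℝ) ^ 2 * ∑ X, exactDensity (H i) X) := by
        simp_rw [Finset.mul_sum]
        rw [Finset.sum_comm]
        exact Finset.sum_le_sum fun X _ => by simpa [Finset.mul_sum] using hK X
    _ ≤ ∑ i, |β i| * (n * (n - 1)) := by
        refine Finset.sum_le_sum fun i _ => mul_le_mul_of_nonneg_left ?_ (abs_nonneg _)
        obtain ⟨u, v, huv⟩ := SimpleGraph.ne_bot_iff_exists_adj.mp (hH i)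
        exact sq_mul_sum_exactDensity_le (H i) huv
    _ = n * (n - 1) * ∑ i, |β i| := by rw [← Finset.sum_mul, mul_comm]

lemma abs_log_inv_card_mul_sum_exp_le {ι : Type*} [Fintype ι] [Nonempty ι] {a : ι → ℝ} {B : ℝ}
    (ha : ∀ i, |a i| ≤ B) :
    |Real.log ((Fintype.card ι : ℝ)⁻¹ * ∑ i, Real.exp (a i))| ≤ B := by
  have hcard : (0 : ℝ) < Fintype.card ι := by exact_mod_cast Fintype.card_pos
  have hlower : Real.exp (-B) ≤ (Fintype.card ι : ℝ)⁻¹ * ∑ i, Real.exp (a i) := by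
    rw [le_inv_mul_iff₀ hcard]
    simpa using Finset.card_nsmul_le_sum Finset.univ (fun i => Real.exp (a i)) _
      fun i _ => Real.exp_le_exp.mpr (neg_le_of_abs_le (ha i))
  have hupper : (Fintype.card ι : ℝ)⁻¹ * ∑ i, Real.exp (a i) ≤ Real.exp B := by
    rw [inv_mul_le_iff₀ hcard]
    simpa using Finset.sum_le_card_nsmul Finset.univ (fun i => Real.exp (a i)) _
      fun i _ => Real.exp_le_exp.mpr (le_of_abs_le (ha i))
  have hpos := (Real.exp_pos (-B)).trans_le hlower
  rw [abs_le]
  exact ⟨(Real.le_log_iff_exp_le hpos).mpr hlower, (Real.log_le_iff_le_exp hpos).mpr hupper⟩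

lemma abs_log_latticeW_le {k : ℕ} {mi : Fin k → ℕ} {H : ∀ i, SimpleGraph (Fin (mi i))}
    (hH : ∀ i, H i ≠ ⊥) (β : Fin k → ℝ) (n : ℕ) :
    |Real.log (latticeW mi H β n)| ≤ n * (n - 1) * ∑ i, |β i| := by
  have hcard : Fintype.card (VertexPair n → Bool) = 2 ^ n.choose 2 := by
    rw [Fintype.card_fun, Fintype.card_bool, Sym2.card_subtype_not_diag, Fintype.card_fin]
  have := abs_log_inv_card_mul_sum_exp_le fun σ : VertexPair n → Bool =>
    abs_sum_interactionK_mul_le hH β n (w := fun X => ∏ e ∈ X, if σ e then (1 : ℝ) else 0)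
      fun X => by
        rw [Finset.abs_prod]
        exact Finset.prod_le_one (fun _ _ => abs_nonneg _) fun e _ => by split_ifs <;> simp
  rwa [hcard, Nat.cast_pow, Nat.cast_ofNat] at this

lemma smallParameterBound_le_log {p : ℕ} (hp : 1 ≤ p) {M : ℝ} (hM : 1 < M) :
    Real.log M * ((p : ℝ) - 1) ^ p / (2 * (M * p) ^ p * (1 + ((p : ℝ) - 1) * Real.log M))
      ≤ Real.log M := by
  have hlog : 0 < Real.log M := Real.log_pos hM
  have hp' : (1 : ℝ) ≤ p := by exact_mod_cast hp
  have hpow : ((p : ℝ) - 1) ^ p ≤ (M * p) ^ p := pow_le_pow_left₀ (by linarith) (by nlinarith) p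
  have hfactor : 1 ≤ 1 + ((p : ℝ) - 1) * Real.log M := by nlinarith
  have hMp : 0 ≤ (M * p : ℝ) ^ p := by positivity
  rw [mul_div_assoc]
  refine mul_le_of_le_one_right hlog.le (div_le_one_of_le₀ ?_ (by positivity))
  nlinarith

/-- in the small parameter region
`m(m−1) Σ|β_i| ≤ (log M)(p−1)^p / (2(Mp)^p(1+(p−1)log M))`, for every `n` one has
`|log W_n| ≤ C(n,2)·log M`; in particular any limit point of `(1/C(n,2)) log W_n` is bounded
in absolute value by `log M`. -/
theorem free_energy_bounded_for_small_parameters {k m p : ℕ} (hp : 2 ≤ p)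
    (mi : Fin k → ℕ) (hmi : ∀ i, 2 ≤ mi i ∧ mi i ≤ m)
    (H : ∀ i, SimpleGraph (Fin (mi i)))
    (hedges : ∀ i, 1 ≤ ((H i).edgeSet.ncard) ∧ (H i).edgeSet.ncard ≤ p)
    (β : Fin k → ℝ) (M : ℝ) (hM : 1 < M)
    (hsmall : (m : ℝ) * ((m : ℝ) - 1) * ∑ i, |β i| ≤
      Real.log M * ((p : ℝ) - 1) ^ p /
        (2 * (M * (p : ℝ)) ^ p * (1 + ((p : ℝ) - 1) * Real.log M))) :
    (∀ n : ℕ, 1 ≤ n →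
      |Real.log (latticeW mi H β n)| ≤ (n.choose 2 : ℝ) * Real.log M) ∧
    ∀ l : ℝ,
      MapClusterPt l Filter.atTop
        (fun n : ℕ => (1 / (n.choose 2 : ℝ)) * Real.log (latticeW mi H β n)) →
      |l| ≤ Real.log M := by
  have hH : ∀ i, H i ≠ ⊥ := fun i =>
    SimpleGraph.edgeSet_nonempty.mp ((Set.ncard_pos (Set.toFinite _)).mp (hedges i).1)
  have hβ : 2 * ∑ i, |β i| ≤ Real.log M := by
    rcases isEmpty_or_nonempty (Fin k) with _ | ⟨⟨i⟩⟩
    · simp [(Real.log_pos hM).le]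
    have hm : (2 : ℝ) ≤ m := by exact_mod_cast (hmi i).1.trans (hmi i).2
    calc 2 * ∑ i, |β i| ≤ m * (m - 1) * ∑ i, |β i| := by
          gcongr
          nlinarith
      _ ≤ Real.log M := hsmall.trans (smallParameterBound_le_log (by omega) hM)
  have hbound : ∀ n : ℕ, |Real.log (latticeW mi H β n)| ≤ (n.choose 2 : ℝ) * Real.log M :=
    fun n => calc
      _ ≤ n * (n - 1) * ∑ i, |β i| := abs_log_latticeW_le hH β n
      _ = (n.choose 2 : ℝ) * (2 * ∑ i, |β i|) := by rw [Nat.cast_choose_two]; ring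
      _ ≤ (n.choose 2 : ℝ) * Real.log M := by gcongr
  refine ⟨fun n _ => hbound n, fun l hl => ?_⟩
  refine (isClosed_le continuous_abs continuous_const).mem_of_mapClusterPt hl ?_
  filter_upwards [Filter.eventually_ge_atTop 2] with n hn
  have hC : (0 : ℝ) < n.choose 2 := by exact_mod_cast Nat.choose_pos hn
  rw [one_div, abs_mul, abs_inv, abs_of_pos hC, inv_mul_le_iff₀ hC]
  exact hbound n
end
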